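/- arXiv:2301.13737 — 3 statements merged into one kernel-verified Lean document; each statement's English description precedes it below -/
import Mathlib

section
/- Let p : ℝ^d → ℝ be a continuously differentiable probability density with p(x) > 0 for every x ∈ ℝ^d. Let v, b : ℝ^d → ℝ^d be continuously differentiable with v bounded, and let D : ℝ^d → ℝ^{d×d} be a bounded continuously differentiable matrix-valued map. Assume the vector field F(x) := p(x) D(x)ᵀ v(x) is integrable, its divergence div F is integrable, F(x) → 0 as ‖x‖ → ∞, and the functions x ↦ v(x)ᵀ b(x) p(x), x ↦ v(x)ᵀ D(x) ∇log p(x) p(x), and x ↦ div(D(x)ᵀ v(x)) p(x) are integrable. Then ∫_{ℝ^d} v(x)ᵀ (b(x) − D(x) ∇log p(x)) p(x) dx = ∫_{ℝ^d} [ v(x)ᵀ b(x) + div(D(x)ᵀ v(x)) ] p(x) dx. -/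
/-!
By the product rule, `div (p Dᵀv) = p ⟨v, D ∇log p⟩ + p div (Dᵀv)`, so the identity reduces to
`∫ div F = 0` for a differentiable integrable field `F` with integrable divergence. By the
divergence theorem, `|∫_{[-R,R]^d} div F|` is bounded by the `L¹` norms of `F` on the faces of
the cube, an integrable function of `R` by Fubini. As `R → ∞` the cube integrals tend to
`∫ div F`, so if this were nonzero, a nonzero constant would be integrable on a half-line.
-/

open MeasureTheory Filter

/-- Divergence of a vector field on `ℝ^d`: the sum of the partial derivatives
`∂F_i/∂x_i`, i.e. the trace of the Jacobian. -/
noncomputable def vdiv {d : ℕ} (F : (Fin d → ℝ) → (Fin d → ℝ)) (x : Fin d → ℝ) : ℝ :=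
  ∑ i, fderiv ℝ F x (Pi.single i 1) i

/-- The `i`-th component of the gradient of a scalar function on `ℝ^d`. -/
noncomputable def grad {d : ℕ} (p : (Fin d → ℝ) → ℝ) (x : Fin d → ℝ) (i : Fin d) : ℝ :=
  fderiv ℝ p x (Pi.single i 1)

open Set Topology

def cube (ι : Type*) (R : ℝ) : Set (ι → ℝ) := Icc (fun _ => -R) (fun _ => R)

lemma aecover_cube {ι : Type*} [Fintype ι] {μ : Measure (ι → ℝ)} :
    AECover μ atTop (cube ι) where
  measurableSet _ := measurableSet_Icc
  ae_eventually_mem := by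
    refine ae_of_all _ fun x => eventually_atTop.2 ⟨‖x‖, fun R hR => ⟨fun i => ?_, fun i => ?_⟩⟩
    all_goals
      have hxi := (abs_le.1 ((Real.norm_eq_abs _).symm ▸ norm_le_pi_norm x i))
      dsimp only
      linarith [hxi.1, hxi.2]

lemma abs_setIntegral_apply_le_integral_norm {α ι : Type*} [MeasurableSpace α] {μ : Measure α}
    [Fintype ι] {f : α → ι → ℝ} (hf : Integrable f μ) (s : Set α) (i : ι) :
    |∫ x in s, f x i ∂μ| ≤ ∫ x, ‖f x‖ ∂μ :=
  calc |∫ x in s, f x i ∂μ| ≤ ∫ x in s, |f x i| ∂μ := abs_integral_le_integral_abs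
    _ ≤ ∫ x in s, ‖f x‖ ∂μ :=
      setIntegral_mono (hf.eval i).abs.integrableOn hf.norm.integrableOn fun x =>
        (Real.norm_eq_abs (f x i)).symm ▸ norm_le_pi_norm (f x) i
    _ ≤ ∫ x, ‖f x‖ ∂μ := setIntegral_le_integral hf.norm (ae_of_all _ fun _ => norm_nonneg _)

lemma MeasureTheory.Integrable.comp_insertNth {E : Type*} [NormedAddCommGroup E] {n : ℕ}
    {f : (Fin (n + 1) → ℝ) → E} (hf : Integrable f) (i : Fin (n + 1)) :
    Integrable fun q : ℝ × (Fin n → ℝ) => f (i.insertNth q.1 q.2) :=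
  ((volume_preserving_piFinSuccAbove (fun _ => ℝ) i).symm.integrable_comp_emb
    (MeasurableEquiv.piFinSuccAbove (fun _ => ℝ) i).symm.measurableEmbedding).2 hf

lemma eq_zero_of_tendsto_of_norm_le_integrable {E : Type*} [NormedAddCommGroup E]
    {φ : ℝ → E} {g : ℝ → ℝ} {L : E} (hφ : Tendsto φ atTop (𝓝 L)) (hg : Integrable g)
    (hle : ∀ᵐ t, 0 ≤ t → ‖φ t‖ ≤ g t) : L = 0 := by
  by_contra hL
  obtain ⟨R, hR⟩ := eventually_atTop.1 <|
    hφ.norm.eventually (lt_mem_nhds (half_lt_self (norm_pos_iff.2 hL)))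
  have hconst : IntegrableOn (fun _ => ‖L‖ / 2) (Ioi (max R 0)) := by
    refine hg.integrableOn.mono' aestronglyMeasurable_const ?_
    filter_upwards [ae_restrict_of_ae hle, ae_restrict_mem measurableSet_Ioi] with t ht htR
    rw [Real.norm_of_nonneg (by positivity)]
    exact (hR t (le_of_max_le_left htR.le)).le.trans (ht (le_of_max_le_right htR.le))
  simp [hL] at hconst

lemma abs_setIntegral_cube_vdiv_le {n : ℕ} {F : (Fin (n + 1) → ℝ) → (Fin (n + 1) → ℝ)}
    (hF : Differentiable ℝ F) (hdiv : Integrable (vdiv F)) {R : ℝ} (hR : 0 ≤ R)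
    (hfront : ∀ i : Fin (n + 1), Integrable fun y => F (i.insertNth R y))
    (hback : ∀ i : Fin (n + 1), Integrable fun y => F (i.insertNth (-R) y)) :
    |∫ x in cube _ R, vdiv F x| ≤
      ∑ i : Fin (n + 1), ((∫ y, ‖F (i.insertNth R y)‖) + ∫ y, ‖F (i.insertNth (-R) y)‖) := by
  have hle : (fun _ : Fin (n + 1) => -R) ≤ fun _ => R := fun _ => by linarith
  have hbox := integral_divergence_of_hasFDerivAt_off_countable _ _ hle F (fderiv ℝ F) ∅
    countable_empty hF.continuous.continuousOn (fun x _ => (hF x).hasFDerivAt) hdiv.integrableOn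
  rw [cube, show (∫ x in Icc _ _, vdiv F x) = _ from hbox]
  refine (Finset.abs_sum_le_sum_abs _ _).trans (Finset.sum_le_sum fun i _ => ?_)
  exact (abs_sub _ _).trans <| add_le_add
    (abs_setIntegral_apply_le_integral_norm (hfront i) _ i)
    (abs_setIntegral_apply_le_integral_norm (hback i) _ i)

lemma integral_vdiv_eq_zero {d : ℕ} {F : (Fin d → ℝ) → (Fin d → ℝ)} (hF : Differentiable ℝ F)
    (hFi : Integrable F) (hdiv : Integrable (vdiv F)) : ∫ x, vdiv F x = 0 := by
  cases d with
  | zero => simp [vdiv]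
  | succ n =>
    have hslice := hFi.comp_insertNth
    have hneg := (Measure.measurePreserving_neg (volume : Measure ℝ)).quasiMeasurePreserving
    have hfront : ∀ᵐ t : ℝ, ∀ i : Fin (n + 1), Integrable fun y => F (i.insertNth t y) :=
      ae_all_iff.2 fun i => (hslice i).prod_right_ae
    have hbound : Integrable fun t : ℝ =>
        ∑ i : Fin (n + 1), ((∫ y, ‖F (i.insertNth t y)‖) + ∫ y, ‖F (i.insertNth (-t) y)‖) :=
      integrable_finsetSum _ fun i _ =>
        (hslice i).integral_norm_prod_left.add (hslice i).integral_norm_prod_left.comp_neg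
    refine eq_zero_of_tendsto_of_norm_le_integrable
      (aecover_cube.integral_tendsto_of_countably_generated hdiv) hbound ?_
    filter_upwards [hfront, hneg.ae hfront] with t ht ht' h0
    exact abs_setIntegral_cube_vdiv_le hF hdiv h0 ht ht'

lemma vdiv_smul {d : ℕ} {p : (Fin d → ℝ) → ℝ} {G : (Fin d → ℝ) → (Fin d → ℝ)} {x : Fin d → ℝ}
    (hp : DifferentiableAt ℝ p x) (hG : DifferentiableAt ℝ G x) :
    vdiv (fun y => p y • G y) x = p x * vdiv G x + ∑ i, grad p x i * G x i := by
  simp only [vdiv, grad, fderiv_fun_smul hp hG, add_apply,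
    smul_apply, ContinuousLinearMap.smulRight_apply, Pi.add_apply,
    Pi.smul_apply, smul_eq_mul, Finset.sum_add_distrib, Finset.mul_sum]

lemma Matrix.sum_vecMul_mul_eq_sum_mul_mulVec {m n R : Type*} [Fintype m] [Fintype n]
    [CommSemiring R] (A : Matrix m n R) (u : m → R) (w : n → R) :
    ∑ i, (∑ j, A j i * u j) * w i = ∑ i, u i * ∑ j, A i j * w j := by
  simpa only [dotProduct, mulVec, vecMul, mul_comm] using (dotProduct_mulVec u A w).symm

theorem fokker_planck_integration_by_parts_general {d : ℕ}
    (p : (Fin d → ℝ) → ℝ) (v b : (Fin d → ℝ) → (Fin d → ℝ))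
    (D : (Fin d → ℝ) → Matrix (Fin d) (Fin d) ℝ)
    -- `p` is a continuously differentiable probability density, positive everywhere
    (hp : ContDiff ℝ 1 p) (hppos : ∀ x, 0 < p x)
    -- `v`, `b` continuously differentiable, `v` bounded
    (hv : ContDiff ℝ 1 v)
    -- `D` bounded and continuously differentiable (entrywise)
    (hD : ∀ i j, ContDiff ℝ 1 fun x => D x i j)
    -- the score `s = ∇log p = ∇p / p`
    (s : (Fin d → ℝ) → (Fin d → ℝ)) (hs : ∀ x i, s x i = grad p x i / p x)
    -- the vector field `F(x) = p(x) D(x)ᵀ v(x)`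
    (F : (Fin d → ℝ) → (Fin d → ℝ))
    (hF : ∀ x i, F x i = p x * ∑ j, D x j i * v x j)
    -- `F` integrable, `div F` integrable, `F → 0` at infinity
    (hFint : Integrable F) (hdivFint : Integrable fun x => vdiv F x)
    -- integrability of the three integrands
    (hint1 : Integrable fun x => (∑ i, v x i * b x i) * p x)
    (hint2 : Integrable fun x => (∑ i, v x i * ∑ j, D x i j * s x j) * p x)
    (hint3 : Integrable fun x => vdiv (fun y i => ∑ j, D y j i * v y j) x * p x) :
    ∫ x, (∑ i, v x i * (b x i - ∑ j, D x i j * s x j)) * p x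
      = ∫ x, ((∑ i, v x i * b x i) + vdiv (fun y i => ∑ j, D y j i * v y j) x) * p x := by
  set G : (Fin d → ℝ) → (Fin d → ℝ) := fun y i => ∑ j, D y j i * v y j
  have hpd := hp.differentiable one_ne_zero
  have hGd : Differentiable ℝ G := (contDiff_pi.2 fun i =>
    ContDiff.sum fun j _ => (hD j i).mul (contDiff_pi.1 hv j)).differentiable one_ne_zero
  have hFG : F = fun x => p x • G x := funext fun x => funext (hF x)
  have hgrad (x i) : grad p x i = p x * s x i := by rw [hs, mul_div_cancel₀ _ (hppos x).ne']
  have hdivF (x) : vdiv F x = (∑ i, v x i * ∑ j, D x i j * s x j) * p x + vdiv G x * p x := by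
    rw [hFG, vdiv_smul (hpd x) (hGd x), ← Matrix.sum_vecMul_mul_eq_sum_mul_mulVec,
      Finset.sum_mul, add_comm, mul_comm (p x)]
    exact congrArg₂ _ (Finset.sum_congr rfl fun i _ => by rw [hgrad]; ring) rfl
  have hdiv_zero : ∫ x, vdiv F x = 0 :=
    integral_vdiv_eq_zero (hFG ▸ hpd.smul hGd) hFint hdivFint
  have hscore : ∫ x, (∑ i, v x i * ∑ j, D x i j * s x j) * p x = -∫ x, vdiv G x * p x := by
    rw [eq_neg_iff_add_eq_zero, ← integral_add hint2 hint3, ← hdiv_zero]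
    exact integral_congr_ae (ae_of_all _ fun x => (hdivF x).symm)
  calc ∫ x, (∑ i, v x i * (b x i - ∑ j, D x i j * s x j)) * p x
      = ∫ x, ((∑ i, v x i * b x i) * p x - (∑ i, v x i * ∑ j, D x i j * s x j) * p x) := by
        simp only [mul_sub, Finset.sum_sub_distrib, sub_mul]
    _ = ∫ x, ((∑ i, v x i * b x i) * p x + vdiv G x * p x) := by
        rw [integral_sub hint1 hint2, integral_add hint1 hint3, hscore, sub_neg_eq_add]
    _ = ∫ x, ((∑ i, v x i * b x i) + vdiv G x) * p x := by simp only [add_mul]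

/-- **Integration by parts for the Fokker–Planck velocity field** (Proposition 1):
`∫ vᵀ (b − D ∇log p) p = ∫ (vᵀ b + div(Dᵀ v)) p`. -/
theorem fokker_planck_integration_by_parts {d : ℕ}
    (p : (Fin d → ℝ) → ℝ) (v b : (Fin d → ℝ) → (Fin d → ℝ))
    (D : (Fin d → ℝ) → Matrix (Fin d) (Fin d) ℝ)
    -- `p` is a continuously differentiable probability density, positive everywhere
    (hp : ContDiff ℝ 1 p) (hppos : ∀ x, 0 < p x) (hpprob : ∫ x, p x = 1)
    -- `v`, `b` continuously differentiable, `v` bounded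
    (hv : ContDiff ℝ 1 v) (hb : ContDiff ℝ 1 b) (hvbd : ∃ M, ∀ x, ‖v x‖ ≤ M)
    -- `D` bounded and continuously differentiable (entrywise)
    (hD : ∀ i j, ContDiff ℝ 1 fun x => D x i j)
    (hDbd : ∃ M, ∀ x i j, |D x i j| ≤ M)
    -- the score `s = ∇log p = ∇p / p`
    (s : (Fin d → ℝ) → (Fin d → ℝ)) (hs : ∀ x i, s x i = grad p x i / p x)
    -- the vector field `F(x) = p(x) D(x)ᵀ v(x)`
    (F : (Fin d → ℝ) → (Fin d → ℝ))
    (hF : ∀ x i, F x i = p x * ∑ j, D x j i * v x j)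
    -- `F` integrable, `div F` integrable, `F → 0` at infinity
    (hFint : Integrable F) (hdivFint : Integrable fun x => vdiv F x)
    (hFzero : Tendsto F (cocompact (Fin d → ℝ)) (nhds 0))
    -- integrability of the three integrands
    (hint1 : Integrable fun x => (∑ i, v x i * b x i) * p x)
    (hint2 : Integrable fun x => (∑ i, v x i * ∑ j, D x i j * s x j) * p x)
    (hint3 : Integrable fun x => vdiv (fun y i => ∑ j, D y j i * v y j) x * p x) :
    ∫ x, (∑ i, v x i * (b x i - ∑ j, D x i j * s x j)) * p x
      = ∫ x, ((∑ i, v x i * b x i) + vdiv (fun y i => ∑ j, D y j i * v y j) x) * p x :=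
  fokker_planck_integration_by_parts_general p v b D hp hppos hv hD s hs F hF hFint hdivFint hint1
    hint2 hint3
end

section
/- Let T > 0, let p : [0,T] × ℝ^d → ℝ be continuously differentiable with p(t,x) > 0 for all (t,x), and let v : [0,T] × ℝ^d → ℝ^d be continuous and continuously differentiable in x. Assume the continuity equation ∂_t p(t,x) = − div_x( p(t,·) v(t,·) )(x) holds for all (t,x) ∈ [0,T] × ℝ^d. Let Φ : [0,T] → ℝ^d be differentiable with Φ'(t) = v(t, Φ(t)) for all t ∈ [0,T]. Then for every t ∈ [0,T], the function t ↦ log p(t, Φ(t)) is differentiable with derivative d/dt [ log p(t, Φ(t)) ] = − (div_x v(t,·))(Φ(t)). -/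
/-!
Along the trajectory, the chain rule gives `d/dt p(t, Φ t) = ∂ₜp + ∇ₓp · v`. The continuity equation
and the product rule `div(p v) = ∇ₓp · v + p div v` turn this into `-p div v`, so dividing by the
positive `p` gives the derivative of `log p(t, Φ t)`.
-/

open MeasureTheory Filter Set

theorem ContinuousLinearMap.apply_eq_sum_smul_apply_single {ι R M : Type*} [Fintype ι]
    [DecidableEq ι] [Semiring R] [TopologicalSpace R] [AddCommMonoid M] [Module R M]
    [TopologicalSpace M] (L : (ι → R) →L[R] M) (w : ι → R) :
    L w = ∑ i, w i • L (Pi.single i 1) := by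
  conv_lhs => rw [← Finset.univ_sum_single w, map_sum]
  refine Finset.sum_congr rfl fun i _ => ?_
  rw [← map_smul, ← Pi.single_smul', smul_eq_mul, mul_one]

theorem vdiv_smul_s3 {d : ℕ} {f : (Fin d → ℝ) → ℝ} {F : (Fin d → ℝ) → (Fin d → ℝ)}
    {x : Fin d → ℝ} (hf : DifferentiableAt ℝ f x) (hF : DifferentiableAt ℝ F x) :
    vdiv (fun y => f y • F y) x = fderiv ℝ f x (F x) + f x * vdiv F x := by
  rw [vdiv, vdiv, fderiv_fun_smul hf hF, Finset.mul_sum,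
    (fderiv ℝ f x).apply_eq_sum_smul_apply_single (F x), ← Finset.sum_add_distrib]
  refine Finset.sum_congr rfl fun i _ => ?_
  simp only [add_apply, smul_apply, ContinuousLinearMap.smulRight_apply, Pi.add_apply,
    Pi.smul_apply, smul_eq_mul]
  ring

theorem DifferentiableAt.hasDerivAt_comp_prodMk {E F : Type*} [NormedAddCommGroup E]
    [NormedSpace ℝ E] [NormedAddCommGroup F] [NormedSpace ℝ F] {p : ℝ × E → F} {Φ : ℝ → E}
    {t : ℝ} {a : F} {w : E} (hp : DifferentiableAt ℝ p (t, Φ t))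
    (hpt : HasDerivAt (fun s => p (s, Φ t)) a t) (hΦ : HasDerivAt Φ w t) :
    HasDerivAt (fun s => p (s, Φ s)) (a + fderiv ℝ (fun y => p (t, y)) (Φ t) w) t := by
  set L := fderiv ℝ p (t, Φ t)
  have hL : HasFDerivAt p L (t, Φ t) := hp.hasFDerivAt
  have ha : a = L (1, 0) :=
    hpt.unique (hL.comp_hasDerivAt t ((hasDerivAt_id t).prodMk (hasDerivAt_const t (Φ t))))
  have hpx : fderiv ℝ (fun y => p (t, y)) (Φ t) = L.comp (.inr ℝ ℝ E) :=
    (hL.comp (Φ t) (hasFDerivAt_prodMk_right t (Φ t))).fderiv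
  refine (hL.comp_hasDerivAt t ((hasDerivAt_id t).prodMk hΦ)).congr_deriv ?_
  rw [ha, hpx, ContinuousLinearMap.comp_apply, ContinuousLinearMap.inr_apply, ← map_add]
  simp

theorem log_density_along_flow_general {d : ℕ} (T : ℝ)
    (p : ℝ × (Fin d → ℝ) → ℝ) (v : ℝ × (Fin d → ℝ) → (Fin d → ℝ))
    -- `p` continuously differentiable and positive on `[0,T] × ℝ^d`
    (hp : ContDiff ℝ 1 p) (hppos : ∀ t ∈ Icc (0 : ℝ) T, ∀ x, 0 < p (t, x))
    -- `v` continuous, and continuously differentiable in `x`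
    (hvx : ∀ t ∈ Icc (0 : ℝ) T, ContDiff ℝ 1 fun x => v (t, x))
    -- the continuity equation `∂_t p = −div_x(p v)`
    (hce : ∀ t ∈ Icc (0 : ℝ) T, ∀ x,
      HasDerivAt (fun s => p (s, x)) (- vdiv (fun y => p (t, y) • v (t, y)) x) t)
    -- `Φ` is a trajectory of the velocity field `v`
    (Φ : ℝ → (Fin d → ℝ))
    (hΦ : ∀ t ∈ Icc (0 : ℝ) T, HasDerivAt Φ (v (t, Φ t)) t) :
    ∀ t ∈ Icc (0 : ℝ) T,
      HasDerivAt (fun s => Real.log (p (s, Φ s))) (- vdiv (fun y => v (t, y)) (Φ t)) t := by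
  intro t ht
  have hp_diff : Differentiable ℝ p := hp.differentiable one_ne_zero
  have hpx_diff : DifferentiableAt ℝ (fun y => p (t, y)) (Φ t) :=
    (hp_diff (t, Φ t)).comp (Φ t) ((differentiableAt_const t).prodMk differentiableAt_id)
  have hv_diff : DifferentiableAt ℝ (fun y => v (t, y)) (Φ t) :=
    (hvx t ht).differentiable one_ne_zero (Φ t)
  have hpath : HasDerivAt (fun s => p (s, Φ s))
      (-(p (t, Φ t) * vdiv (fun y => v (t, y)) (Φ t))) t := by
    refine ((hp_diff (t, Φ t)).hasDerivAt_comp_prodMk (hce t ht (Φ t)) (hΦ t ht)).congr_deriv ?_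
    rw [vdiv_smul_s3 hpx_diff hv_diff]
    ring
  have hp_ne : p (t, Φ t) ≠ 0 := (hppos t ht (Φ t)).ne'
  refine (hpath.log hp_ne).congr_deriv ?_
  rw [neg_div, mul_div_cancel_left₀ _ hp_ne]

/-- **Instantaneous change of variables (differential form)**: along a trajectory `Φ`
of the velocity field `v` of a solution of the continuity equation,
`d/dt log p(t, Φ(t)) = −(div_x v(t,·))(Φ(t))`. -/
theorem log_density_along_flow {d : ℕ} (T : ℝ) (hT : 0 < T)
    (p : ℝ × (Fin d → ℝ) → ℝ) (v : ℝ × (Fin d → ℝ) → (Fin d → ℝ))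
    -- `p` continuously differentiable and positive on `[0,T] × ℝ^d`
    (hp : ContDiff ℝ 1 p) (hppos : ∀ t ∈ Icc (0 : ℝ) T, ∀ x, 0 < p (t, x))
    -- `v` continuous, and continuously differentiable in `x`
    (hv : Continuous v) (hvx : ∀ t ∈ Icc (0 : ℝ) T, ContDiff ℝ 1 fun x => v (t, x))
    -- the continuity equation `∂_t p = −div_x(p v)`
    (hce : ∀ t ∈ Icc (0 : ℝ) T, ∀ x,
      HasDerivAt (fun s => p (s, x)) (- vdiv (fun y => p (t, y) • v (t, y)) x) t)
    -- `Φ` is a trajectory of the velocity field `v`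
    (Φ : ℝ → (Fin d → ℝ))
    (hΦ : ∀ t ∈ Icc (0 : ℝ) T, HasDerivAt Φ (v (t, Φ t)) t) :
    ∀ t ∈ Icc (0 : ℝ) T,
      HasDerivAt (fun s => Real.log (p (s, Φ s))) (- vdiv (fun y => v (t, y)) (Φ t)) t :=
  log_density_along_flow_general T p v hp hppos hvx hce Φ hΦ
end

section
/- Let Γ be a real symmetric positive-definite d×d matrix and β ∈ ℝ^d. Define m(t) = (I − exp(−tΓ)) β, Σ(t) = Γ⁻¹(I − exp(−2tΓ)) + exp(−2tΓ), and the Gaussian density p(t,x) = (2π)^{−d/2} det(Σ(t))^{−1/2} exp( −½ (x − m(t))ᵀ Σ(t)⁻¹ (x − m(t)) ) for t ≥ 0, x ∈ ℝ^d. Then p(0,·) is the standard Gaussian density N(0, I), and for every t > 0 and x ∈ ℝ^d, ∂_t p(t,x) = div_x( y ↦ Γ(y − β) p(t,y) )(x) + Δ_x p(t,x), where Δ_x denotes the Laplacian in x. -/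
open Matrix

/-- Laplacian of a scalar function on `ℝ^d`: `Δp = ∑ i, ∂²p/∂x_i²`. -/
noncomputable def lap {d : ℕ} (p : (Fin d → ℝ) → ℝ) (x : Fin d → ℝ) : ℝ :=
  ∑ i, fderiv ℝ (fun y => fderiv ℝ p y (Pi.single i 1)) x (Pi.single i 1)

/-!
Diagonalize `Γ = U diag(λ) Uᵀ`. Then `Σ(t)` and `I − e^{−tΓ}` are diagonal in the same
orthonormal basis, with entries `σ_k(t) = λ_k⁻¹(1 − e^{−2tλ_k}) + e^{−2tλ_k}` and
`1 − e^{−tλ_k}`, so in the coordinates `a = Uᵀx`, `b = Uᵀβ` the density factors as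
`p(t,x) = (2π)^{−d/2} exp ∑_k ℓ_k(t)`, where `ℓ_k` is a one-dimensional Gaussian log-density;
`∂_t p = p ∑_k ℓ_k'` then follows from `σ_k' = 2 − 2λ_kσ_k`.

On the other side, a Gaussian `p = C exp(−½ (x−c)ᵀA(x−c))` with `A` symmetric has
`∇p = −p W`, `W = A(x−c)`, whence
`div(p Γ(x−β)) + Δp = p (tr Γ − ⟨W, Γ(x−β)⟩ + |W|² − tr A)`. For `A = Σ(t)⁻¹` this splits
along the eigenbasis of `Γ` into exactly the sum `∑_k ℓ_k'`.
-/

section ConjDiagonal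
variable {n : Type*} [Fintype n] [DecidableEq n]

noncomputable def conjDiagonal (U : unitaryGroup n ℝ) : (n → ℝ) →ₐ[ℝ] Matrix n n ℝ :=
  ((Unitary.conjStarAlgAut ℝ (Matrix n n ℝ) U).toAlgEquiv : Matrix n n ℝ →ₐ[ℝ] Matrix n n ℝ).comp
    (diagonalAlgHom ℝ)

variable (U : unitaryGroup n ℝ)

theorem conjDiagonal_apply (w : n → ℝ) :
    conjDiagonal U w = (U : Matrix n n ℝ) * diagonal w * star (U : Matrix n n ℝ) := rfl

theorem star_mulVec_conjDiagonal_mulVec (w v : n → ℝ) :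
    star (U : Matrix n n ℝ) *ᵥ (conjDiagonal U w *ᵥ v) = w * (star (U : Matrix n n ℝ) *ᵥ v) := by
  rw [conjDiagonal_apply, mulVec_mulVec, ← mul_assoc, ← mul_assoc, Unitary.coe_star_mul_self,
    one_mul, ← mulVec_mulVec]
  funext k
  exact mulVec_diagonal _ _ _

theorem star_mulVec_sub_conjDiagonal_mulVec (w x β : n → ℝ) :
    star (U : Matrix n n ℝ) *ᵥ (x - conjDiagonal U w *ᵥ β)
      = star (U : Matrix n n ℝ) *ᵥ x - w * (star (U : Matrix n n ℝ) *ᵥ β) := by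
  rw [mulVec_sub, star_mulVec_conjDiagonal_mulVec]

theorem dotProduct_star_mulVec (u v : n → ℝ) :
    (star (U : Matrix n n ℝ) *ᵥ u) ⬝ᵥ (star (U : Matrix n n ℝ) *ᵥ v) = u ⬝ᵥ v := by
  rw [dotProduct_mulVec, vecMul_mulVec, star_eq_conjTranspose,
    conjTranspose_eq_transpose_of_trivial, transpose_transpose]
  simp [← conjTranspose_eq_transpose_of_trivial, ← star_eq_conjTranspose]

theorem det_conjDiagonal (w : n → ℝ) : (conjDiagonal U w).det = ∏ k, w k := by
  rw [conjDiagonal_apply, det_mul_comm, ← mul_assoc, Unitary.coe_star_mul_self, one_mul,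
    det_diagonal]

theorem trace_conjDiagonal (w : n → ℝ) : (conjDiagonal U w).trace = ∑ k, w k := by
  rw [conjDiagonal_apply, trace_mul_cycle, Unitary.coe_star_mul_self, one_mul, trace_diagonal]

theorem isSymm_conjDiagonal (w : n → ℝ) : (conjDiagonal U w).IsSymm := by
  simp [IsSymm, conjDiagonal_apply, transpose_mul, star_eq_conjTranspose, mul_assoc]

theorem inv_conjDiagonal {w : n → ℝ} (hw : ∀ k, w k ≠ 0) :
    (conjDiagonal U w)⁻¹ = conjDiagonal U w⁻¹ := by
  refine inv_eq_left_inv ?_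
  rw [← map_mul, ← map_one (conjDiagonal U)]
  congr 1
  funext k
  exact inv_mul_cancel₀ (hw k)

theorem exp_conjDiagonal (w : n → ℝ) :
    NormedSpace.exp (conjDiagonal U w) = conjDiagonal U (fun k => Real.exp (w k)) := by
  have hU : (U : Matrix n n ℝ)⁻¹ = star (U : Matrix n n ℝ) :=
    inv_eq_left_inv (Unitary.coe_star_mul_self U)
  rw [conjDiagonal_apply, ← hU, exp_conj _ _ Unitary.isUnit_coe, exp_diagonal, Pi.exp_def]
  simp [Real.exp_eq_exp_ℝ, conjDiagonal_apply, hU]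

theorem Matrix.PosDef.exists_eq_conjDiagonal {Γ : Matrix n n ℝ} (hΓ : Γ.PosDef) :
    ∃ U : unitaryGroup n ℝ, ∃ lam : n → ℝ, (∀ k, 0 < lam k) ∧ Γ = conjDiagonal U lam :=
  ⟨hΓ.1.eigenvectorUnitary, hΓ.1.eigenvalues, hΓ.eigenvalues_pos, by
    conv_lhs => rw [hΓ.1.spectral_theorem]
    simp [conjDiagonal_apply]⟩

end ConjDiagonal

section Gaussian
variable {n : Type*} [Fintype n]

noncomputable def dotProductCLM (u : n → ℝ) : (n → ℝ) →L[ℝ] ℝ :=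
  LinearMap.toContinuousLinearMap (dotProductBilin ℝ ℝ u)

@[simp] theorem dotProductCLM_apply (u v : n → ℝ) : dotProductCLM u v = u ⬝ᵥ v := rfl

theorem hasFDerivAt_dotProduct_sub (u c y : n → ℝ) :
    HasFDerivAt (fun y => u ⬝ᵥ (y - c)) (dotProductCLM u) y := by
  simpa [dotProduct_sub] using (dotProductCLM u).hasFDerivAt.sub_const (u ⬝ᵥ c)

noncomputable def gaussian (C : ℝ) (A : Matrix n n ℝ) (c y : n → ℝ) : ℝ :=
  C * Real.exp (-(1 / 2) * ((y - c) ⬝ᵥ (A *ᵥ (y - c))))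

variable [DecidableEq n] {A : Matrix n n ℝ}

theorem hasFDerivAt_quadForm (hA : A.IsSymm) (c y : n → ℝ) :
    HasFDerivAt (fun y => (y - c) ⬝ᵥ (A *ᵥ (y - c)))
      ((2 : ℝ) • dotProductCLM (A *ᵥ (y - c))) y := by
  have hterm : ∀ i ∈ Finset.univ, HasFDerivAt (fun y => (y - c) i * (A i ⬝ᵥ (y - c)))
      ((y - c) i • dotProductCLM (A i) + (A i ⬝ᵥ (y - c)) • dotProductCLM (Pi.single i 1)) y := by
    intro i _
    have hi : HasFDerivAt (fun y => (y - c) i) (dotProductCLM (Pi.single i 1)) y := by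
      simpa [single_dotProduct] using hasFDerivAt_dotProduct_sub (Pi.single i 1) c y
    exact hi.fun_mul (hasFDerivAt_dotProduct_sub (A i) c y)
  refine (HasFDerivAt.fun_sum hterm).congr_fderiv ?_
  ext v
  have hsymm : (y - c) ⬝ᵥ (A *ᵥ v) = (A *ᵥ (y - c)) ⬝ᵥ v := by
    rw [dotProduct_mulVec, ← mulVec_transpose, hA.eq, dotProduct_comm]
  have hleft : ∑ i, (y - c) i * (A i ⬝ᵥ v) = (y - c) ⬝ᵥ (A *ᵥ v) := rfl
  have hright : ∑ i, (A i ⬝ᵥ (y - c)) * v i = (A *ᵥ (y - c)) ⬝ᵥ v := rfl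
  simp only [Finset.sum_add_distrib, _root_.add_apply, _root_.sum_apply, _root_.smul_apply,
    dotProductCLM_apply, smul_eq_mul, single_dotProduct, one_mul]
  rw [hleft, hright, hsymm]
  ring

theorem hasFDerivAt_gaussian (hA : A.IsSymm) (C : ℝ) (c y : n → ℝ) :
    HasFDerivAt (gaussian C A c) (-gaussian C A c y • dotProductCLM (A *ᵥ (y - c))) y := by
  refine (((hasFDerivAt_quadForm hA c y).const_mul (-(1 / 2) : ℝ)).exp.const_mul C).congr_fderiv ?_
  ext v
  simp [gaussian]
  ring

theorem fderiv_gaussian_mul_dotProduct_sub (hA : A.IsSymm) (C : ℝ) (c u e x v : n → ℝ) :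
    fderiv ℝ (fun y => gaussian C A c y * (u ⬝ᵥ (y - e))) x v
      = gaussian C A c x * (u ⬝ᵥ v - (A *ᵥ (x - c)) ⬝ᵥ v * u ⬝ᵥ (x - e)) := by
  rw [((hasFDerivAt_gaussian hA C c x).fun_mul (hasFDerivAt_dotProduct_sub u e x)).fderiv]
  simp
  ring

end Gaussian

section DivergenceLaplacian
variable {d : ℕ} {A : Matrix (Fin d) (Fin d) ℝ}

theorem lap_gaussian (hA : A.IsSymm) (C : ℝ) (c x : Fin d → ℝ) :
    lap (gaussian C A c) x
      = gaussian C A c x * ((A *ᵥ (x - c)) ⬝ᵥ (A *ᵥ (x - c)) - A.trace) := by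
  have hgrad : ∀ i, (fun y => fderiv ℝ (gaussian C A c) y (Pi.single i 1))
      = fun y => gaussian C A c y * (-A i ⬝ᵥ (y - c)) := by
    intro i
    funext y
    rw [(hasFDerivAt_gaussian hA C c y).fderiv]
    simp only [_root_.smul_apply, dotProductCLM_apply, dotProduct_single, mul_one, smul_eq_mul,
      neg_dotProduct, mul_neg, neg_mul]
    rfl
  simp only [lap, hgrad, fderiv_gaussian_mul_dotProduct_sub hA, ← Finset.mul_sum]
  congr 1
  simp only [dotProduct_single, mul_one, neg_dotProduct, Pi.neg_apply, mul_neg, sub_neg_eq_add]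
  rw [Finset.sum_add_distrib, Finset.sum_neg_distrib, neg_add_eq_sub]
  rfl

theorem vdiv_gaussian_smul (hA : A.IsSymm) (C : ℝ) (c : Fin d → ℝ) (B : Matrix (Fin d) (Fin d) ℝ)
    (β x : Fin d → ℝ) :
    vdiv (fun y => gaussian C A c y • (B *ᵥ (y - β))) x
      = gaussian C A c x * (B.trace - (A *ᵥ (x - c)) ⬝ᵥ (B *ᵥ (x - β))) := by
  have hdiff : ∀ i, DifferentiableAt ℝ (fun y => gaussian C A c y * (B i ⬝ᵥ (y - β))) x :=
    fun i => ((hasFDerivAt_gaussian hA C c x).fun_mul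
      (hasFDerivAt_dotProduct_sub (B i) β x)).differentiableAt
  have hF : (fun y => gaussian C A c y • (B *ᵥ (y - β)))
      = fun y i => gaussian C A c y * (B i ⬝ᵥ (y - β)) := rfl
  simp only [vdiv, hF, fderiv_pi hdiff, ContinuousLinearMap.pi_apply,
    fderiv_gaussian_mul_dotProduct_sub hA, dotProduct_single, mul_one, ← Finset.mul_sum,
    Finset.sum_sub_distrib]
  rfl

end DivergenceLaplacian

noncomputable def ouVariance (l s : ℝ) : ℝ :=
  l⁻¹ * (1 - Real.exp (-(2 * s) * l)) + Real.exp (-(2 * s) * l)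

noncomputable def ouMeanFactor (l s : ℝ) : ℝ := 1 - Real.exp (-s * l)

/-- Up to `−½ log 2π`, the log-density at `a` of `N(ouMeanFactor l s * b, ouVariance l s)`;
`a` and `b` are the coordinates of `x` and `β` along an eigenvector of `Γ` with eigenvalue `l`. -/
noncomputable def ouLogDensity (l a b s : ℝ) : ℝ :=
  -(1 / 2) * (Real.log (ouVariance l s) + (a - ouMeanFactor l s * b) ^ 2 / ouVariance l s)

noncomputable def ouLogDensityRate (l a b s : ℝ) : ℝ :=
  let w := (a - ouMeanFactor l s * b) / ouVariance l s
  l - (ouVariance l s)⁻¹ + w ^ 2 - l * w * (a - b)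

theorem ouVariance_pos {l s : ℝ} (hl : 0 < l) (hs : 0 ≤ s) : 0 < ouVariance l s := by
  have he : Real.exp (-(2 * s) * l) ≤ 1 := Real.exp_le_one_iff.mpr (by nlinarith)
  have := Real.exp_pos (-(2 * s) * l)
  unfold ouVariance
  positivity

theorem hasDerivAt_ouVariance {l : ℝ} (hl : l ≠ 0) (t : ℝ) :
    HasDerivAt (ouVariance l) (2 - 2 * l * ouVariance l t) t := by
  have hlin : HasDerivAt (fun s : ℝ => -(2 * s) * l) (-2 * l) t := by
    simpa using ((hasDerivAt_id t).const_mul 2).neg.mul_const l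
  have hE := hlin.exp
  refine (((hE.const_sub 1).const_mul l⁻¹).add hE).congr_deriv ?_
  unfold ouVariance
  field_simp
  ring

theorem hasDerivAt_ouMeanFactor (l t : ℝ) :
    HasDerivAt (ouMeanFactor l) (l * (1 - ouMeanFactor l t)) t := by
  have hlin : HasDerivAt (fun s : ℝ => -s * l) (-l) t := by
    simpa using (hasDerivAt_id t).neg.mul_const l
  refine (hlin.exp.const_sub 1).congr_deriv ?_
  simp only [ouMeanFactor]
  ring

theorem hasDerivAt_ouLogDensity {l : ℝ} (hl : 0 < l) (a b : ℝ) {t : ℝ} (ht : 0 ≤ t) :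
    HasDerivAt (ouLogDensity l a b) (ouLogDensityRate l a b t) t := by
  have hσ := ouVariance_pos hl ht
  have hz := ((hasDerivAt_ouMeanFactor l t).mul_const b).const_sub a
  have h := (((hasDerivAt_ouVariance hl.ne' t).log hσ.ne').add
    ((hz.pow 2).div (hasDerivAt_ouVariance hl.ne' t) hσ.ne')).const_mul (-(1 / 2))
  refine h.congr_deriv ?_
  simp only [ouLogDensityRate, Pi.pow_apply]
  field_simp
  ring

section OrnsteinUhlenbeck
variable {n : Type*} [Fintype n] [DecidableEq n] (U : unitaryGroup n ℝ) {lam : n → ℝ}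

theorem ouCovariance_eq_conjDiagonal (hlam : ∀ k, lam k ≠ 0) (s : ℝ) :
    (conjDiagonal U lam)⁻¹ * (1 - NormedSpace.exp ((-(2 * s)) • conjDiagonal U lam))
      + NormedSpace.exp ((-(2 * s)) • conjDiagonal U lam)
      = conjDiagonal U (fun k => ouVariance (lam k) s) := by
  rw [← map_smul, exp_conjDiagonal, inv_conjDiagonal U hlam, ← map_one (conjDiagonal U), ← map_sub,
    ← map_mul, ← map_add]
  rfl

theorem ouMeanMatrix_eq_conjDiagonal (s : ℝ) :
    1 - NormedSpace.exp ((-s) • conjDiagonal U lam)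
      = conjDiagonal U (fun k => ouMeanFactor (lam k) s) := by
  rw [← map_smul, exp_conjDiagonal, ← map_one (conjDiagonal U), ← map_sub]
  rfl

theorem det_rpow_mul_exp_eq_exp_sum_ouLogDensity (hlam : ∀ k, 0 < lam k) {s : ℝ} (hs : 0 ≤ s)
    {S : Matrix n n ℝ} {m β : n → ℝ} (hS : S = conjDiagonal U fun k => ouVariance (lam k) s)
    (hm : m = conjDiagonal U (fun k => ouMeanFactor (lam k) s) *ᵥ β) (x : n → ℝ) :
    S.det ^ (-(1 : ℝ) / 2) * Real.exp (-(1 / 2) * ((x - m) ⬝ᵥ (S⁻¹ *ᵥ (x - m))))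
      = Real.exp (∑ k, ouLogDensity (lam k) ((star (U : Matrix n n ℝ) *ᵥ x) k)
          ((star (U : Matrix n n ℝ) *ᵥ β) k) s) := by
  have hσ : ∀ k, 0 < ouVariance (lam k) s := fun k => ouVariance_pos (hlam k) hs
  rw [hS, hm, det_conjDiagonal, inv_conjDiagonal U fun k => (hσ k).ne', ← dotProduct_star_mulVec U,
    star_mulVec_conjDiagonal_mulVec, star_mulVec_sub_conjDiagonal_mulVec,
    Real.rpow_def_of_pos (Finset.prod_pos fun k _ => hσ k), Real.log_prod fun k _ => (hσ k).ne',
    ← Real.exp_add]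
  congr 1
  simp only [dotProduct, Finset.sum_mul, Finset.mul_sum, ← Finset.sum_add_distrib]
  refine Finset.sum_congr rfl fun k _ => ?_
  simp only [ouLogDensity, Pi.sub_apply, Pi.mul_apply, Pi.inv_apply]
  ring

theorem ouGenerator_eq_sum_ouLogDensityRate (hlam : ∀ k, 0 < lam k) {t : ℝ} (ht : 0 ≤ t)
    {S : Matrix n n ℝ} {m β : n → ℝ} (hS : S = conjDiagonal U fun k => ouVariance (lam k) t)
    (hm : m = conjDiagonal U (fun k => ouMeanFactor (lam k) t) *ᵥ β) (x : n → ℝ) :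
    (conjDiagonal U lam).trace - (S⁻¹ *ᵥ (x - m)) ⬝ᵥ (conjDiagonal U lam *ᵥ (x - β))
        + ((S⁻¹ *ᵥ (x - m)) ⬝ᵥ (S⁻¹ *ᵥ (x - m)) - S⁻¹.trace)
      = ∑ k, ouLogDensityRate (lam k) ((star (U : Matrix n n ℝ) *ᵥ x) k)
          ((star (U : Matrix n n ℝ) *ᵥ β) k) t := by
  have hσ : ∀ k, 0 < ouVariance (lam k) t := fun k => ouVariance_pos (hlam k) ht
  rw [hS, hm, inv_conjDiagonal U fun k => (hσ k).ne', ← dotProduct_star_mulVec U,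
    ← dotProduct_star_mulVec U (conjDiagonal U _ *ᵥ _), star_mulVec_conjDiagonal_mulVec,
    star_mulVec_conjDiagonal_mulVec, star_mulVec_sub_conjDiagonal_mulVec, trace_conjDiagonal,
    trace_conjDiagonal, mulVec_sub]
  simp only [dotProduct, ← Finset.sum_sub_distrib, ← Finset.sum_add_distrib]
  refine Finset.sum_congr rfl fun k _ => ?_
  have := (hσ k).ne'
  simp only [ouLogDensityRate, Pi.sub_apply, Pi.mul_apply, Pi.inv_apply]
  field_simp
  ring

end OrnsteinUhlenbeck

theorem ou_gaussian_solution_general {d : ℕ} (Γ : Matrix (Fin d) (Fin d) ℝ)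
    (hΓpd : Γ.PosDef) (β : Fin d → ℝ)
    (m : ℝ → Fin d → ℝ) (S : ℝ → Matrix (Fin d) (Fin d) ℝ)
    (hm : ∀ t, m t = ((1 : Matrix (Fin d) (Fin d) ℝ) - NormedSpace.exp ((-t) • Γ)) *ᵥ β)
    (hS : ∀ t, S t = Γ⁻¹ * ((1 : Matrix (Fin d) (Fin d) ℝ)
          - NormedSpace.exp ((-(2 * t)) • Γ)) + NormedSpace.exp ((-(2 * t)) • Γ))
    (p : ℝ → (Fin d → ℝ) → ℝ)
    (hp : ∀ t x, p t x = (2 * Real.pi) ^ (-(d : ℝ) / 2) * (S t).det ^ (-(1 : ℝ) / 2) *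
      Real.exp (-(1 / 2) * ((x - m t) ⬝ᵥ ((S t)⁻¹ *ᵥ (x - m t))))) :
    (∀ x, p 0 x = (2 * Real.pi) ^ (-(d : ℝ) / 2) * Real.exp (-(1 / 2) * (x ⬝ᵥ x)))
      ∧ ∀ t : ℝ, 0 < t → ∀ x,
        HasDerivAt (fun s => p s x)
          (vdiv (fun y => p t y • (Γ *ᵥ (y - β))) x + lap (p t) x) t := by
  refine ⟨fun x => by simp [hp, hS, hm], fun t ht x => ?_⟩
  obtain ⟨U, lam, hlam, rfl⟩ := hΓpd.exists_eq_conjDiagonal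
  set a := star (U : Matrix (Fin d) (Fin d) ℝ) *ᵥ x
  set b := star (U : Matrix (Fin d) (Fin d) ℝ) *ᵥ β
  have hS' : ∀ s, S s = conjDiagonal U fun k => ouVariance (lam k) s := fun s => by
    rw [hS, ouCovariance_eq_conjDiagonal U fun k => (hlam k).ne']
  have hm' : ∀ s, m s = conjDiagonal U (fun k => ouMeanFactor (lam k) s) *ᵥ β := fun s => by
    rw [hm, ouMeanMatrix_eq_conjDiagonal]
  have hp' : ∀ s, 0 ≤ s → p s x = (2 * Real.pi) ^ (-(d : ℝ) / 2) *
      Real.exp (∑ k, ouLogDensity (lam k) (a k) (b k) s) := fun s hs => by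
    rw [hp, mul_assoc, det_rpow_mul_exp_eq_exp_sum_ouLogDensity U hlam hs (hS' s) (hm' s)]
  have hsymm : ((S t)⁻¹).IsSymm := by
    rw [hS', inv_conjDiagonal U fun k => (ouVariance_pos (hlam k) ht.le).ne']
    exact isSymm_conjDiagonal U _
  have hpt : p t = gaussian ((2 * Real.pi) ^ (-(d : ℝ) / 2) * (S t).det ^ (-(1 : ℝ) / 2))
      (S t)⁻¹ (m t) := funext (hp t)
  rw [hpt, vdiv_gaussian_smul hsymm, lap_gaussian hsymm, ← hpt, ← mul_add,
    ouGenerator_eq_sum_ouLogDensityRate U hlam ht.le (hS' t) (hm' t), hp' t ht.le, mul_assoc]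
  refine ((HasDerivAt.fun_sum fun k _ => hasDerivAt_ouLogDensity (hlam k) _ _ ht.le).exp.const_mul
    _).congr_of_eventuallyEq ?_
  filter_upwards [lt_mem_nhds ht] with s hs using hp' s hs.le

/-- **Closed-form Gaussian solution of the Ornstein–Uhlenbeck Fokker–Planck equation**:
with `m(t) = (I − e^{−tΓ})β` and `Σ(t) = Γ⁻¹(I − e^{−2tΓ}) + e^{−2tΓ}`, the Gaussian
density `p(t,·) = N(m(t), Σ(t))` starts at the standard Gaussian `N(0, I)` and solves
`∂_t p = div_x(Γ(x − β) p) + Δ_x p` for all `t > 0`. -/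
theorem ou_gaussian_solution {d : ℕ} (Γ : Matrix (Fin d) (Fin d) ℝ)
    (hΓsymm : Γ.IsSymm) (hΓpd : Γ.PosDef) (β : Fin d → ℝ)
    (m : ℝ → Fin d → ℝ) (S : ℝ → Matrix (Fin d) (Fin d) ℝ)
    (hm : ∀ t, m t = ((1 : Matrix (Fin d) (Fin d) ℝ) - NormedSpace.exp ((-t) • Γ)) *ᵥ β)
    (hS : ∀ t, S t = Γ⁻¹ * ((1 : Matrix (Fin d) (Fin d) ℝ)
          - NormedSpace.exp ((-(2 * t)) • Γ)) + NormedSpace.exp ((-(2 * t)) • Γ))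
    (p : ℝ → (Fin d → ℝ) → ℝ)
    (hp : ∀ t x, p t x = (2 * Real.pi) ^ (-(d : ℝ) / 2) * (S t).det ^ (-(1 : ℝ) / 2) *
      Real.exp (-(1 / 2) * ((x - m t) ⬝ᵥ ((S t)⁻¹ *ᵥ (x - m t))))) :
    (∀ x, p 0 x = (2 * Real.pi) ^ (-(d : ℝ) / 2) * Real.exp (-(1 / 2) * (x ⬝ᵥ x)))
      ∧ ∀ t : ℝ, 0 < t → ∀ x,
        HasDerivAt (fun s => p s x)
          (vdiv (fun y => p t y • (Γ *ᵥ (y - β))) x + lap (p t) x) t :=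
  ou_gaussian_solution_general Γ hΓpd β m S hm hS p hp
end
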